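/- For t ∈ [0,T], σ > 0, β ≥ 0, let s(t)² = σ²((e^{2T−t}+e^t)/(e^{2T}+1))² + β² (e^{2T−t}+e^t)²(e^{2t}−1)/(2(e^{2T}+1)(e^{2T}+e^{2t})) and s₀(t)² = σ²((e^{2T−t}+e^t)/(e^{2T}+1))². Then the 1-Wasserstein distance between the one-dimensional Gaussians N(m, s(t)²) and N(m, s₀(t)²) satisfies W₁(N(m,s(t)²), N(m,s₀(t)²)) ≤ |s(t) − s₀(t)| · √(2/π) ≤ C β² for a constant C depending only on T and σ. -/

import Mathlib

open MeasureTheory ProbabilityTheory Real Set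

/-- The 1-Wasserstein distance, defined as the infimum over couplings of the
expected distance. -/
noncomputable def W1 {E : Type*} [NormedAddCommGroup E] [MeasurableSpace E]
    (μ ν : Measure E) : ℝ :=
  sInf { c | ∃ cpl : Measure (E × E), cpl.map Prod.fst = μ ∧ cpl.map Prod.snd = ν ∧
    c = ∫ p, ‖p.1 - p.2‖ ∂cpl }

/-- Variance of the viscous population distribution in the closed-form LQ example. -/
noncomputable def sSq (T σ β t : ℝ) : ℝ :=
  σ ^ 2 * ((Real.exp (2 * T - t) + Real.exp t) / (Real.exp (2 * T) + 1)) ^ 2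
    + β ^ 2 * (Real.exp (2 * T - t) + Real.exp t) ^ 2 * (Real.exp (2 * t) - 1)
      / (2 * (Real.exp (2 * T) + 1) * (Real.exp (2 * T) + Real.exp (2 * t)))

/-- Variance of the inviscid population distribution in the closed-form LQ example. -/
noncomputable def s0Sq (T σ t : ℝ) : ℝ :=
  σ ^ 2 * ((Real.exp (2 * T - t) + Real.exp t) / (Real.exp (2 * T) + 1)) ^ 2

/-! Couple `N(m, a²)` and `N(m, b²)` by pushing a standard normal `Z` forward along
`x ↦ (m + a x, m + b x)`: the cost is `|a - b| E|Z| = |a - b| √(2/π)`.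
Since `e^{2T-t} + e^t = e^{-t} (e^{2T} + e^{2t})`, we get `s₀(t) = σ e^{-t} r(t)` and
`s(t)² - s₀(t)² = β² r(t) (1 - e^{-2t}) / 2` with `r(t) = lqRatio T t ∈ [1, 2]`.
Hence `s(t)² - s₀(t)² ≤ β²` and `s₀(t) ≥ σ e^{-T}`, and `|√x - √y| ≤ |x - y| / √y` finishes. -/

open scoped NNReal

lemma integral_Ioi_mul_exp_neg_sq_div_two :
    ∫ x in Ioi (0:ℝ), x * exp (-x ^ 2 / 2) = 1 := by
  have h := integral_mul_cexp_neg_mul_sq (b := (1 / 2 : ℂ)) (by norm_num)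
  rw [show (2 * (1 / 2 : ℂ))⁻¹ = 1 by norm_num] at h
  apply Complex.ofReal_injective
  rw [← integral_complex_ofReal, Complex.ofReal_one, ← h]
  congr 1 with x
  push_cast
  ring_nf

lemma integral_abs_gaussianReal_zero_one : ∫ x, |x| ∂gaussianReal 0 1 = √(2 / π) := by
  have hsymm : ∫ x, exp (-x ^ 2 / 2) * |x| = 2 := by
    have := integral_comp_abs (f := fun x => x * exp (-x ^ 2 / 2))
    simp only [sq_abs] at this
    simp_rw [mul_comm (exp _)]
    rw [this, integral_Ioi_mul_exp_neg_sq_div_two, mul_one]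
  rw [integral_gaussianReal_eq_integral_smul one_ne_zero]
  simp only [gaussianPDFReal, smul_eq_mul, NNReal.coe_one, mul_one, sub_zero, mul_assoc]
  rw [integral_const_mul, hsymm]
  have hπ := pi_pos
  rw [inv_mul_eq_div, div_eq_iff (by positivity), ← sqrt_mul (by positivity),
    show 2 / π * (2 * π) = 2 ^ 2 by field_simp, sqrt_sq zero_le_two]

lemma gaussianReal_map_const_add_const_mul {μ : ℝ} {v : ℝ≥0} (y c : ℝ) :
    (gaussianReal μ v).map (fun x => y + c * x)
      = gaussianReal (c * μ + y) (.mk (c ^ 2) (sq_nonneg c) * v) := by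
  rw [show (fun x => y + c * x) = (y + ·) ∘ (c * ·) from rfl,
    ← Measure.map_map (by fun_prop) (by fun_prop), gaussianReal_map_const_mul,
    gaussianReal_map_const_add]

lemma W1_le_integral_norm_sub {E : Type*} [NormedAddCommGroup E] [MeasurableSpace E]
    {μ ν : Measure E} {γ : Measure (E × E)} (hfst : γ.map Prod.fst = μ)
    (hsnd : γ.map Prod.snd = ν) : W1 μ ν ≤ ∫ p, ‖p.1 - p.2‖ ∂γ :=
  csInf_le ⟨0, by rintro _ ⟨_, -, -, rfl⟩; positivity⟩ ⟨γ, hfst, hsnd, rfl⟩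

lemma W1_gaussianReal_le (m : ℝ) (v w : ℝ≥0) :
    W1 (gaussianReal m v) (gaussianReal m w) ≤ |√(v : ℝ) - √(w : ℝ)| * √(2 / π) := by
  set a := √(v : ℝ)
  set b := √(w : ℝ)
  have hmap (u : ℝ≥0) :
      (gaussianReal 0 1).map (fun x => m + √(u : ℝ) * x) = gaussianReal m u := by
    rw [gaussianReal_map_const_add_const_mul]
    congr 1
    · ring
    · rw [mul_one, ← NNReal.coe_inj]
      exact sq_sqrt u.2
  have hφ : Measurable fun x : ℝ => (m + a * x, m + b * x) := by fun_prop
  calc W1 (gaussianReal m v) (gaussianReal m w)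
      ≤ ∫ p, ‖p.1 - p.2‖ ∂(gaussianReal 0 1).map (fun x => (m + a * x, m + b * x)) := by
        refine W1_le_integral_norm_sub ?_ ?_
        · rw [Measure.map_map measurable_fst hφ]; exact hmap v
        · rw [Measure.map_map measurable_snd hφ]; exact hmap w
    _ = ∫ x, |a - b| * |x| ∂gaussianReal 0 1 := by
        rw [integral_map hφ.aemeasurable (by fun_prop)]
        congr with x
        rw [Real.norm_eq_abs, ← abs_mul]
        ring_nf
    _ = |a - b| * √(2 / π) := by rw [integral_const_mul, integral_abs_gaussianReal_zero_one]

lemma abs_sqrt_sub_sqrt_le {x y : ℝ} (hx : 0 ≤ x) (hy : 0 < y) :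
    |√x - √y| ≤ |x - y| / √y := by
  rw [le_div_iff₀ (sqrt_pos.mpr hy)]
  calc |√x - √y| * √y ≤ |√x - √y| * (√x + √y) := by
        gcongr; exact le_add_of_nonneg_left (sqrt_nonneg x)
    _ = |(√x - √y) * (√x + √y)| := by
        rw [abs_mul, abs_of_nonneg (add_nonneg (sqrt_nonneg x) (sqrt_nonneg y))]
    _ = |x - y| := by
      congr 1
      linear_combination sq_sqrt hx - sq_sqrt hy.le

noncomputable def lqRatio (T t : ℝ) : ℝ := (exp (2 * T) + exp (2 * t)) / (exp (2 * T) + 1)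

lemma exp_two_mul_sub_add_exp (T t : ℝ) :
    exp (2 * T - t) + exp t = exp (-t) * (exp (2 * T) + exp (2 * t)) := by
  rw [mul_add, ← exp_add, ← exp_add]
  ring_nf

lemma s0Sq_eq (T σ t : ℝ) : s0Sq T σ t = (σ * exp (-t) * lqRatio T t) ^ 2 := by
  rw [s0Sq, exp_two_mul_sub_add_exp, lqRatio]
  ring

lemma sSq_sub_s0Sq_eq (T σ β t : ℝ) :
    sSq T σ β t - s0Sq T σ t = β ^ 2 / 2 * lqRatio T t * (1 - exp (-(2 * t))) := by
  have h2t : exp (2 * t) = exp t ^ 2 := by rw [← exp_nat_mul]; ring_nf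
  rw [sSq, s0Sq, add_sub_cancel_left, exp_two_mul_sub_add_exp, lqRatio, exp_neg, exp_neg, h2t]
  field_simp

section LQExample

variable {T σ β t : ℝ}

lemma one_le_lqRatio (ht : 0 ≤ t) : 1 ≤ lqRatio T t := by
  rw [lqRatio, one_le_div (by positivity)]
  gcongr
  exact one_le_exp (by linarith)

lemma lqRatio_le_two (ht : t ≤ T) : lqRatio T t ≤ 2 := by
  rw [lqRatio, div_le_iff₀ (by positivity)]
  have : exp (2 * t) ≤ exp (2 * T) := exp_le_exp.2 (by linarith)
  linarith

lemma mul_exp_neg_le_sqrt_s0Sq (hσ : 0 ≤ σ) (ht : t ∈ Icc 0 T) :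
    σ * exp (-T) ≤ √(s0Sq T σ t) := by
  have hr := one_le_lqRatio (T := T) ht.1
  rw [s0Sq_eq, sqrt_sq (by positivity), mul_assoc]
  gcongr
  calc exp (-T) ≤ exp (-t) := exp_le_exp.2 (by linarith [ht.2])
    _ ≤ exp (-t) * lqRatio T t := le_mul_of_one_le_right (exp_pos _).le hr

lemma sSq_sub_s0Sq_mem_Icc (ht : t ∈ Icc 0 T) : sSq T σ β t - s0Sq T σ t ∈ Icc 0 (β ^ 2) := by
  have hr₁ := one_le_lqRatio (T := T) ht.1
  have hr₂ := lqRatio_le_two ht.2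
  have he₁ : 0 ≤ 1 - exp (-(2 * t)) := sub_nonneg.2 (exp_le_one_iff.2 (by linarith [ht.1]))
  have he₂ : 1 - exp (-(2 * t)) ≤ 1 := sub_le_self _ (exp_pos _).le
  rw [sSq_sub_s0Sq_eq]
  constructor
  · positivity
  · calc β ^ 2 / 2 * lqRatio T t * (1 - exp (-(2 * t))) ≤ β ^ 2 / 2 * 2 * 1 := by gcongr
      _ = β ^ 2 := by ring

end LQExample

theorem gaussian_W1_vanishing_viscosity_rate_general
    (T σ : ℝ) (hσ : 0 < σ) :
    ∃ C > (0:ℝ), ∀ (m β : ℝ), 0 ≤ β → ∀ t ∈ Icc (0:ℝ) T,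
      W1 (gaussianReal m (Real.toNNReal (sSq T σ β t)))
          (gaussianReal m (Real.toNNReal (s0Sq T σ t)))
        ≤ |Real.sqrt (sSq T σ β t) - Real.sqrt (s0Sq T σ t)| * Real.sqrt (2 / π) ∧
      |Real.sqrt (sSq T σ β t) - Real.sqrt (s0Sq T σ t)| * Real.sqrt (2 / π)
        ≤ C * β ^ 2 := by
  refine ⟨√(2 / π) / (σ * exp (-T)), by positivity, fun m β _ t ht => ?_⟩
  obtain ⟨hdiff_nonneg, hdiff_le⟩ := sSq_sub_s0Sq_mem_Icc (σ := σ) (β := β) ht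
  have hsqrt_s0 := mul_exp_neg_le_sqrt_s0Sq hσ.le ht
  have hs0 : 0 < s0Sq T σ t := sqrt_pos.1 ((by positivity : 0 < σ * exp (-T)).trans_le hsqrt_s0)
  have hs : 0 ≤ sSq T σ β t := by linarith
  constructor
  · have hW := W1_gaussianReal_le m (sSq T σ β t).toNNReal (s0Sq T σ t).toNNReal
    rwa [coe_toNNReal _ hs, coe_toNNReal _ hs0.le] at hW
  · calc |√(sSq T σ β t) - √(s0Sq T σ t)| * √(2 / π)
        ≤ |sSq T σ β t - s0Sq T σ t| / √(s0Sq T σ t) * √(2 / π) := by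
          gcongr; exact abs_sqrt_sub_sqrt_le hs hs0
      _ ≤ β ^ 2 / (σ * exp (-T)) * √(2 / π) := by
          rw [abs_of_nonneg hdiff_nonneg]; gcongr
      _ = √(2 / π) / (σ * exp (-T)) * β ^ 2 := by ring

/-- For the one-dimensional Gaussians of the LQ example,
`W₁(N(m, s(t)²), N(m, s₀(t)²)) ≤ |s(t) - s₀(t)| √(2/π) ≤ C β²` with `C = C(T, σ)`. -/
theorem gaussian_W1_vanishing_viscosity_rate
    (T σ : ℝ) (hT : 0 < T) (hσ : 0 < σ) :
    ∃ C > (0:ℝ), ∀ (m β : ℝ), 0 ≤ β → ∀ t ∈ Icc (0:ℝ) T,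
      W1 (gaussianReal m (Real.toNNReal (sSq T σ β t)))
          (gaussianReal m (Real.toNNReal (s0Sq T σ t)))
        ≤ |Real.sqrt (sSq T σ β t) - Real.sqrt (s0Sq T σ t)| * Real.sqrt (2 / π) ∧
      |Real.sqrt (sSq T σ β t) - Real.sqrt (s0Sq T σ t)| * Real.sqrt (2 / π)
        ≤ C * β ^ 2 :=
  gaussian_W1_vanishing_viscosity_rate_general T σ hσ
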